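/- There is a constant C > 0 such that for every continuously differentiable function g : ℝ³ → ℂ with g(0) = 0 and g(sω) → 0 as s → ∞ for every ω ∈ S², one has Σ_{k∈ℤ} 2^{k/2} ‖ χ_{{ξ : 2^k ≤ |ξ| < 2^{k+1}}}(ξ) g(ξ)/|ξ| ‖_{L²(ℝ³)} ≤ C Σ_{k∈ℤ} 2^{k/2} ‖ χ_{{ξ : 2^k ≤ |ξ| < 2^{k+1}}}(ξ) (ξ/|ξ|)·∇g(ξ) ‖_{L²(ℝ³)}, i.e. the Hardy-type inequality ‖g(ξ)/|ξ|‖_{\dot B^{1/2}_{2,1}} ≲ ‖∂_r g‖_{\dot B^{1/2}_{2,1}} holds, where ∂_r g(ξ) = (ξ/|ξ|)·∇g(ξ) is the radial derivative. -/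

import Mathlib

/-!
Along the ray through `ξ`, the fundamental theorem of calculus and the decay of `g` give
`|g ξ| / |ξ| ≤ ∫₁^∞ |∂_r g (t ξ)| dt`. By Minkowski's integral inequality, the `L²` norm of the
right-hand side over the shell `2^k ≤ |ξ| < 2^(k+1)` is at most
`∫₁^∞ t^(-3/2) ‖∂_r g‖_{L²(t · shell k)} dt`, and for `t ∈ [2^m, 2^(m+1))` the rescaled shell is
covered by shells `k + m` and `k + m + 1`.
This bounds the `k`-th term on the left by `∑ₘ 2^(-m/2) (N (k+m) + N (k+m+1))`, `N j` being the
`j`-th shell norm of `∂_r g`; against the weight `2^(k/2)` this is a convolution with the summable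
kernel `2^(-m)`, whence the constant `4`.
-/

open MeasureTheory Set Filter
open scoped ENNReal Topology

noncomputable section

/-- `ℝ³` as a Euclidean space. -/
abbrev E3 : Type := EuclideanSpace ℝ (Fin 3)

/-- The weighted dyadic norm `Σ_{k∈ℤ} 2^{σk} ‖χ_{2^k ≤ |ξ| < 2^{k+1}} h‖_{L²}`,
valued in `[0,∞]`. -/
noncomputable def dyadicNorm (σ : ℝ) (h : E3 → ℂ) : ℝ≥0∞ :=
  ∑' k : ℤ, ENNReal.ofReal ((2 : ℝ) ^ (σ * (k : ℝ))) *
    eLpNorm ({ξ : E3 | (2 : ℝ) ^ k ≤ ‖ξ‖ ∧ ‖ξ‖ < (2 : ℝ) ^ (k + 1)}.indicator h) 2 volume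

/-- The radial derivative `∂_r g(ξ) = (ξ/|ξ|)·∇g(ξ)`. -/
noncomputable def radialDeriv (g : E3 → ℂ) (ξ : E3) : ℂ :=
  fderiv ℝ g ξ (‖ξ‖⁻¹ • ξ)

open Function

section Minkowski

variable {α β : Type*} [MeasurableSpace α] [MeasurableSpace β] {μ : Measure α} {ν : Measure β}

theorem eLpNorm_two_eq_lintegral_rpow (f : α → ℝ≥0∞) :
    eLpNorm f 2 μ = (∫⁻ x, f x ^ (2 : ℝ) ∂μ) ^ (1 / 2 : ℝ) := by
  simp [eLpNorm_eq_lintegral_rpow_enorm_toReal]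

theorem eLpNorm_two_lintegral_le_lintegral_eLpNorm_two [SFinite μ] [SFinite ν]
    {F : β → α → ℝ≥0∞} (hF : Measurable (uncurry F)) :
    eLpNorm (fun x => ∫⁻ t, F t x ∂ν) 2 μ ≤ ∫⁻ t, eLpNorm (F t) 2 μ ∂ν := by
  have hFx : ∀ x, Measurable fun t => F t x := fun x => hF.of_uncurry_right
  have hFt : ∀ t, Measurable (F t) := fun t => hF.of_uncurry_left
  have hJ : Measurable fun t => eLpNorm (F t) 2 μ := by
    simp_rw [eLpNorm_two_eq_lintegral_rpow]
    exact ((hF.pow_const _).lintegral_prod_right (ν := μ)).pow_const _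
  have hsq : ∫⁻ x, (∫⁻ t, F t x ∂ν) ^ (2 : ℝ) ∂μ ≤ (∫⁻ t, eLpNorm (F t) 2 μ ∂ν) ^ (2 : ℝ) :=
    calc ∫⁻ x, (∫⁻ t, F t x ∂ν) ^ (2 : ℝ) ∂μ
        = ∫⁻ x, ∫⁻ t, ∫⁻ s, F t x * F s x ∂ν ∂ν ∂μ := by
          simp_rw [ENNReal.rpow_two, sq, lintegral_lintegral_mul (hFx _).aemeasurable
            (hFx _).aemeasurable]
      _ = ∫⁻ t, ∫⁻ s, ∫⁻ x, F t x * F s x ∂μ ∂ν ∂ν := by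
          rw [lintegral_lintegral_swap]
          · refine lintegral_congr fun t => lintegral_lintegral_swap ?_
            exact ((hF.comp (measurable_const.prodMk measurable_fst)).mul
              (hF.comp (measurable_snd.prodMk measurable_fst))).aemeasurable
          · exact (Measurable.lintegral_prod_right
              ((hF.comp (measurable_fst.snd.prodMk measurable_fst.fst)).mul
                (hF.comp (measurable_snd.prodMk measurable_fst.fst)))).aemeasurable
      _ ≤ ∫⁻ t, ∫⁻ s, eLpNorm (F t) 2 μ * eLpNorm (F s) 2 μ ∂ν ∂ν := by
          gcongr with t s
          simpa [eLpNorm_two_eq_lintegral_rpow] using ENNReal.lintegral_mul_le_Lp_mul_Lq μ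
            Real.HolderConjugate.two_two (hFt t).aemeasurable (hFt s).aemeasurable
      _ = (∫⁻ t, eLpNorm (F t) 2 μ ∂ν) ^ (2 : ℝ) := by
          rw [lintegral_lintegral_mul hJ.aemeasurable hJ.aemeasurable, ENNReal.rpow_two, sq]
  calc eLpNorm (fun x => ∫⁻ t, F t x ∂ν) 2 μ
      ≤ ((∫⁻ t, eLpNorm (F t) 2 μ ∂ν) ^ (2 : ℝ)) ^ (1 / 2 : ℝ) := by
        rw [eLpNorm_two_eq_lintegral_rpow]
        gcongr
    _ = ∫⁻ t, eLpNorm (F t) 2 μ ∂ν := by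
        rw [← ENNReal.rpow_mul]
        norm_num

end Minkowski

section Ray

variable {E F : Type*} [NormedAddCommGroup E] [NormedSpace ℝ E]
  [NormedAddCommGroup F] [NormedSpace ℝ F] [CompleteSpace F]

theorem enorm_le_lintegral_Ioi_enorm_of_hasDerivAt {f f' : ℝ → F} {a : ℝ}
    (hderiv : ∀ x ∈ Ici a, HasDerivAt f (f' x) x)
    (hf' : AEStronglyMeasurable f' (volume.restrict (Ioi a)))
    (hf : Tendsto f atTop (𝓝 0)) :
    ‖f a‖ₑ ≤ ∫⁻ x in Ioi a, ‖f' x‖ₑ := by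
  by_cases htop : ∫⁻ x in Ioi a, ‖f' x‖ₑ = ∞
  · simp [htop]
  have hint : IntegrableOn f' (Ioi a) := ⟨hf', lt_top_iff_ne_top.2 htop⟩
  calc ‖f a‖ₑ = ‖∫ x in Ioi a, f' x‖ₑ := by
        rw [integral_Ioi_of_hasDerivAt_of_tendsto' hderiv hint hf, zero_sub, enorm_neg]
    _ ≤ ∫⁻ x in Ioi a, ‖f' x‖ₑ := enorm_integral_le_lintegral_enorm _

theorem enorm_le_lintegral_Ioi_one_enorm_fderiv {g : E → F} (hg : ContDiff ℝ 1 g) {ξ : E}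
    (hξ : Tendsto (fun s : ℝ => g (s • ξ)) atTop (𝓝 0)) :
    ‖g ξ‖ₑ ≤ ∫⁻ t in Ioi (1 : ℝ), ‖fderiv ℝ g (t • ξ) ξ‖ₑ := by
  have hderiv : ∀ t : ℝ, HasDerivAt (fun s : ℝ => g (s • ξ)) (fderiv ℝ g (t • ξ) ξ) t := by
    intro t
    simpa [comp_def] using ((hg.differentiable one_ne_zero) (t • ξ)).hasFDerivAt.comp_hasDerivAt t
      ((hasDerivAt_id t).smul_const ξ)
  have hcont : Continuous fun t : ℝ => fderiv ℝ g (t • ξ) ξ :=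
    ((hg.continuous_fderiv one_ne_zero).comp (continuous_id.smul continuous_const)).clm_apply
      continuous_const
  simpa using enorm_le_lintegral_Ioi_enorm_of_hasDerivAt (a := 1) (fun t _ => hderiv t)
    hcont.aestronglyMeasurable hξ

end Ray

section Scaling

variable {E ε : Type*} [NormedAddCommGroup E] [NormedSpace ℝ E] [FiniteDimensional ℝ E]
  [MeasurableSpace E] [BorelSpace E] (μ : Measure E) [μ.IsAddHaarMeasure]
  [TopologicalSpace ε] [ContinuousENorm ε]

theorem eLpNorm_comp_smul {p : ℝ≥0∞} (hp : p ≠ ∞) {f : E → ε} (hf : AEStronglyMeasurable f μ)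
    {r : ℝ} (hr : r ≠ 0) :
    eLpNorm (fun x => f (r • x)) p μ
      = ENNReal.ofReal |(r ^ Module.finrank ℝ E)⁻¹| ^ (1 / p).toReal * eLpNorm f p μ := by
  have hmap := Measure.map_addHaar_smul μ hr
  rw [← comp_def, ← eLpNorm_map_measure (by rw [hmap]; exact hf.smul_measure _)
    (measurable_const_smul r).aemeasurable, hmap, eLpNorm_smul_measure_of_ne_top hp, smul_eq_mul]

end Scaling

def dyadicShell {E : Type*} [Norm E] (k : ℤ) : Set E :=
  {ξ : E | (2 : ℝ) ^ k ≤ ‖ξ‖ ∧ ‖ξ‖ < (2 : ℝ) ^ (k + 1)}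

section DyadicShell

variable {E : Type*} [NormedAddCommGroup E]

theorem measurableSet_dyadicShell [MeasurableSpace E] [OpensMeasurableSpace E] (k : ℤ) :
    MeasurableSet (dyadicShell k : Set E) :=
  (measurableSet_le measurable_const measurable_norm).inter
    (measurableSet_lt measurable_norm measurable_const)

theorem ne_zero_of_mem_dyadicShell {k : ℤ} {ξ : E} (hξ : ξ ∈ dyadicShell k) : ξ ≠ 0 := by
  rintro rfl
  exact (zpow_pos two_pos k).not_ge (by simpa using hξ.1)

theorem smul_mem_dyadicShell [NormedSpace ℝ E] {k : ℤ} {m : ℕ} {t : ℝ}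
    (ht : t ∈ Ico ((2 : ℝ) ^ m) (2 ^ (m + 1))) {ξ : E} (hξ : ξ ∈ dyadicShell k) :
    t • ξ ∈ dyadicShell (k + m) ∪ dyadicShell (k + m + 1) := by
  have hnorm : ‖t • ξ‖ = ‖ξ‖ * t := by
    rw [norm_smul, Real.norm_of_nonneg ((pow_nonneg zero_le_two m).trans ht.1), mul_comm]
  have two_zpow_add (j : ℤ) (n : ℕ) : (2 : ℝ) ^ (j + n) = 2 ^ j * 2 ^ n := by
    rw [zpow_add₀ two_ne_zero, zpow_natCast]
  have hlow : (2 : ℝ) ^ (k + m) ≤ ‖t • ξ‖ := by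
    rw [hnorm, two_zpow_add]
    exact mul_le_mul hξ.1 ht.1 (by positivity) (norm_nonneg ξ)
  have hhigh : ‖t • ξ‖ < (2 : ℝ) ^ (k + m + 1 + 1) := by
    rw [hnorm, show k + m + 1 + 1 = (k + 1) + ((m + 1 : ℕ) : ℤ) by push_cast; ring, two_zpow_add]
    exact mul_lt_mul'' hξ.2 ht.2 (norm_nonneg ξ) ((pow_nonneg zero_le_two m).trans ht.1)
  by_cases hmid : ‖t • ξ‖ < (2 : ℝ) ^ (k + m + 1)
  · exact Or.inl ⟨hlow, hmid⟩
  · exact Or.inr ⟨not_lt.1 hmid, hhigh⟩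

end DyadicShell

section ShellEstimate

variable {E : Type*} [NormedAddCommGroup E] [NormedSpace ℝ E] [FiniteDimensional ℝ E]
  [MeasurableSpace E] [BorelSpace E] (μ : Measure E) [μ.IsAddHaarMeasure]
  {D : E → ℝ≥0∞}

theorem eLpNorm_indicator_comp_smul_le (hD : Measurable D) (k : ℤ) {m : ℕ} {t : ℝ}
    (ht : t ∈ Ico ((2 : ℝ) ^ m) (2 ^ (m + 1))) :
    eLpNorm ((dyadicShell k).indicator fun ξ => D (t • ξ)) 2 μ
      ≤ 2 ^ (-(m : ℝ) * Module.finrank ℝ E / 2) *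
        (eLpNorm ((dyadicShell (k + m)).indicator D) 2 μ
          + eLpNorm ((dyadicShell (k + m + 1)).indicator D) 2 μ) := by
  set d := Module.finrank ℝ E
  set H := (dyadicShell (k + m)).indicator D + (dyadicShell (k + m + 1)).indicator D
  have ht0 : 0 < t := (pow_pos two_pos m).trans_le ht.1
  have hH : Measurable H := (hD.indicator (measurableSet_dyadicShell _)).add
    (hD.indicator (measurableSet_dyadicShell _))
  have hpoint (ξ : E) : (dyadicShell k).indicator (fun ξ => D (t • ξ)) ξ ≤ H (t • ξ) := by
    by_cases hξ : ξ ∈ dyadicShell k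
    · rw [indicator_of_mem hξ]
      rcases smul_mem_dyadicShell ht hξ with h | h <;> simp [H, indicator_of_mem h]
    · simp [indicator_of_notMem hξ]
  have hscale : ENNReal.ofReal |(t ^ d)⁻¹| ^ (1 / 2 : ℝ≥0∞).toReal
      ≤ 2 ^ (-(m : ℝ) * d / 2) := by
    have hpow : ENNReal.ofReal |(t ^ d)⁻¹| ≤ 2 ^ (-(m : ℝ) * d) := by
      rw [abs_of_pos (by positivity), ← ENNReal.ofReal_ofNat 2, ENNReal.ofReal_rpow_of_pos two_pos]
      refine ENNReal.ofReal_le_ofReal ?_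
      rw [neg_mul, Real.rpow_neg zero_le_two, Real.rpow_mul zero_le_two, Real.rpow_natCast,
        Real.rpow_natCast]
      exact inv_anti₀ (by positivity) (pow_le_pow_left₀ (by positivity) ht.1 d)
    calc ENNReal.ofReal |(t ^ d)⁻¹| ^ (1 / 2 : ℝ≥0∞).toReal
        ≤ (2 ^ (-(m : ℝ) * d)) ^ (1 / 2 : ℝ) := by
          rw [show (1 / 2 : ℝ≥0∞).toReal = 1 / 2 by norm_num]
          gcongr
      _ = 2 ^ (-(m : ℝ) * d / 2) := by rw [← ENNReal.rpow_mul]; ring_nf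
  calc eLpNorm ((dyadicShell k).indicator fun ξ => D (t • ξ)) 2 μ
      ≤ eLpNorm (fun ξ => H (t • ξ)) 2 μ := eLpNorm_mono_enorm (by simpa using hpoint)
    _ = ENNReal.ofReal |(t ^ d)⁻¹| ^ (1 / 2 : ℝ≥0∞).toReal * eLpNorm H 2 μ :=
        eLpNorm_comp_smul μ ENNReal.ofNat_ne_top hH.aestronglyMeasurable ht0.ne'
    _ ≤ _ := by
        gcongr
        exact eLpNorm_add_le (hD.indicator (measurableSet_dyadicShell _)).aestronglyMeasurable
          (hD.indicator (measurableSet_dyadicShell _)).aestronglyMeasurable one_le_two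

theorem eLpNorm_indicator_lintegral_comp_smul_le (hD : Measurable D) (k : ℤ) :
    eLpNorm ((dyadicShell k).indicator fun ξ => ∫⁻ t in Ioi (1 : ℝ), D (t • ξ)) 2 μ
      ≤ ∑' m : ℕ, 2 ^ ((m : ℝ) * (1 - Module.finrank ℝ E / 2)) *
        (eLpNorm ((dyadicShell (k + m)).indicator D) 2 μ
          + eLpNorm ((dyadicShell (k + m + 1)).indicator D) 2 μ) := by
  set N : ℤ → ℝ≥0∞ := fun j => eLpNorm ((dyadicShell j).indicator D) 2 μ
  have hmeas : Measurable (uncurry fun (t : ℝ) (ξ : E) => (dyadicShell k).indicator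
      (fun ξ => D (t • ξ)) ξ) :=
    (hD.comp measurable_smul).indicator (measurable_snd (measurableSet_dyadicShell k))
  have hcover : Ioi (1 : ℝ) ⊆ ⋃ m : ℕ, Ico ((2 : ℝ) ^ m) (2 ^ (m + 1)) :=
    fun t ht => mem_iUnion.2 (exists_nat_pow_near ht.out.le one_lt_two)
  calc eLpNorm ((dyadicShell k).indicator fun ξ => ∫⁻ t in Ioi (1 : ℝ), D (t • ξ)) 2 μ
      = eLpNorm (fun ξ => ∫⁻ t in Ioi (1 : ℝ),
          (dyadicShell k).indicator (fun ξ => D (t • ξ)) ξ) 2 μ := by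
        congr 1
        ext ξ
        by_cases hξ : ξ ∈ dyadicShell k <;> simp [hξ]
    _ ≤ ∫⁻ t in Ioi (1 : ℝ), eLpNorm ((dyadicShell k).indicator fun ξ => D (t • ξ)) 2 μ :=
        eLpNorm_two_lintegral_le_lintegral_eLpNorm_two hmeas
    _ ≤ ∑' m : ℕ, ∫⁻ t in Ico ((2 : ℝ) ^ m) (2 ^ (m + 1)),
          eLpNorm ((dyadicShell k).indicator fun ξ => D (t • ξ)) 2 μ :=
        (lintegral_mono_set hcover).trans (lintegral_iUnion_le _ _)
    _ ≤ ∑' m : ℕ, ∫⁻ _ in Ico ((2 : ℝ) ^ m) (2 ^ (m + 1)),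
          2 ^ (-(m : ℝ) * Module.finrank ℝ E / 2) * (N (k + m) + N (k + m + 1)) :=
        ENNReal.tsum_le_tsum fun m => setLIntegral_mono measurable_const
          fun t ht => eLpNorm_indicator_comp_smul_le μ hD k ht
    _ = ∑' m : ℕ, 2 ^ ((m : ℝ) * (1 - Module.finrank ℝ E / 2)) * (N (k + m) + N (k + m + 1)) := by
        congr 1
        ext m
        rw [setLIntegral_const, Real.volume_Ico, mul_right_comm,
          show (2 : ℝ) ^ (m + 1) - 2 ^ m = 2 ^ m by ring, ENNReal.ofReal_pow zero_le_two,
          ENNReal.ofReal_ofNat, ← ENNReal.rpow_natCast,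
          ← ENNReal.rpow_add _ _ two_ne_zero ENNReal.ofNat_ne_top]
        ring_nf

end ShellEstimate

theorem tsum_two_rpow_mul_comp_add (σ : ℝ) (N : ℤ → ℝ≥0∞) (n : ℤ) :
    ∑' k : ℤ, 2 ^ (σ * k) * N (k + n) = 2 ^ (-(σ * n)) * ∑' j : ℤ, 2 ^ (σ * j) * N j := by
  rw [← ENNReal.tsum_mul_left, ← (Equiv.subRight n).tsum_eq]
  refine tsum_congr fun j => ?_
  rw [Equiv.subRight_apply, sub_add_cancel, ← mul_assoc,
    ← ENNReal.rpow_add _ _ two_ne_zero ENNReal.ofNat_ne_top]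
  congr 2
  push_cast
  ring

theorem tsum_two_rpow_mul_tsum_le (N : ℤ → ℝ≥0∞) :
    ∑' k : ℤ, 2 ^ ((1 / 2 : ℝ) * k) * ∑' m : ℕ, 2 ^ (-(m : ℝ) / 2) * (N (k + m) + N (k + m + 1))
      ≤ 4 * ∑' j : ℤ, 2 ^ ((1 / 2 : ℝ) * j) * N j := by
  set S := ∑' j : ℤ, 2 ^ ((1 / 2 : ℝ) * j) * N j
  have hshift (n : ℤ) : ∑' k : ℤ, 2 ^ ((1 / 2 : ℝ) * k) * N (k + n) = 2 ^ (-(n : ℝ) / 2) * S := by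
    rw [tsum_two_rpow_mul_comp_add]
    congr 2
    ring
  have hterm (m : ℕ) :
      2 ^ (-(m : ℝ) / 2) * (2 ^ (-(m : ℝ) / 2) * S + 2 ^ (-((m + 1 : ℤ) : ℝ) / 2) * S)
        ≤ 2 * 2⁻¹ ^ m * S := by
    have hle : (2 : ℝ≥0∞) ^ (-((m + 1 : ℤ) : ℝ) / 2) ≤ 2 ^ (-(m : ℝ) / 2) :=
      ENNReal.rpow_le_rpow_of_exponent_le one_le_two (by push_cast; linarith)
    calc _ ≤ 2 ^ (-(m : ℝ) / 2) * (2 ^ (-(m : ℝ) / 2) * S + 2 ^ (-(m : ℝ) / 2) * S) := by gcongr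
      _ = 2 * (2 ^ (-(m : ℝ) / 2) * 2 ^ (-(m : ℝ) / 2)) * S := by ring
      _ = 2 * 2⁻¹ ^ m * S := by
        rw [← ENNReal.rpow_add _ _ two_ne_zero ENNReal.ofNat_ne_top, ← ENNReal.rpow_neg_one,
          ← ENNReal.rpow_natCast, ← ENNReal.rpow_mul]
        ring_nf
  calc ∑' k : ℤ, 2 ^ ((1 / 2 : ℝ) * k) * ∑' m : ℕ, 2 ^ (-(m : ℝ) / 2) * (N (k + m) + N (k + m + 1))
      = ∑' m : ℕ, 2 ^ (-(m : ℝ) / 2) * (∑' k : ℤ, 2 ^ ((1 / 2 : ℝ) * k) * N (k + m)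
          + ∑' k : ℤ, 2 ^ ((1 / 2 : ℝ) * k) * N (k + (m + 1 : ℤ))) := by
        simp_rw [← ENNReal.tsum_mul_left, ← ENNReal.tsum_add, ← ENNReal.tsum_mul_left]
        rw [ENNReal.tsum_comm]
        refine tsum_congr fun m => tsum_congr fun k => ?_
        rw [← add_assoc]
        ring
    _ ≤ ∑' m : ℕ, 2 * 2⁻¹ ^ m * S := by
        refine ENNReal.tsum_le_tsum fun m => ?_
        rw [hshift, hshift]
        exact hterm m
    _ = 4 * S := by
        rw [ENNReal.tsum_mul_right, ENNReal.tsum_mul_left, ENNReal.tsum_geometric,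
          ENNReal.one_sub_inv_two, inv_inv]
        norm_num

theorem tendsto_comp_smul_of_forall_norm_eq_one {E F : Type*} [NormedAddCommGroup E]
    [NormedSpace ℝ E] {f : E → F} {l : Filter F}
    (h : ∀ ω : E, ‖ω‖ = 1 → Tendsto (fun s : ℝ => f (s • ω)) atTop l) {ξ : E} (hξ : ξ ≠ 0) :
    Tendsto (fun s : ℝ => f (s • ξ)) atTop l := by
  refine ((h _ (norm_smul_inv_norm (𝕜 := ℝ) hξ)).comp
    (tendsto_id.atTop_mul_const (norm_pos_iff.2 hξ))).congr fun s => ?_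
  simp [smul_smul, hξ]

theorem measurable_radialDeriv (g : E3 → ℂ) : Measurable (radialDeriv g) :=
  isBoundedBilinearMap_apply.continuous.measurable.comp
    ((measurable_fderiv ℝ g).prodMk (measurable_norm.inv.smul measurable_id))

theorem fderiv_smul_apply_eq_norm_smul_radialDeriv (g : E3 → ℂ) {t : ℝ} (ht : 0 < t) (ξ : E3) :
    fderiv ℝ g (t • ξ) ξ = ‖ξ‖ • radialDeriv g (t • ξ) := by
  rcases eq_or_ne ξ 0 with rfl | hξ
  · simp
  rw [radialDeriv, ← ContinuousLinearMap.map_smul, smul_smul, norm_smul, Real.norm_of_nonneg ht.le,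
    smul_smul]
  field_simp
  simp

theorem enorm_div_norm_le_lintegral_radialDeriv {g : E3 → ℂ} (hg : ContDiff ℝ 1 g) {ξ : E3}
    (hξ : Tendsto (fun s : ℝ => g (s • ξ)) atTop (𝓝 0)) :
    ‖g ξ / (‖ξ‖ : ℂ)‖ₑ ≤ ∫⁻ t in Ioi (1 : ℝ), ‖radialDeriv g (t • ξ)‖ₑ := by
  have hray : ‖g ξ‖ₑ ≤ ‖ξ‖ₑ * ∫⁻ t in Ioi (1 : ℝ), ‖radialDeriv g (t • ξ)‖ₑ := by
    calc ‖g ξ‖ₑ ≤ ∫⁻ t in Ioi (1 : ℝ), ‖fderiv ℝ g (t • ξ) ξ‖ₑ :=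
          enorm_le_lintegral_Ioi_one_enorm_fderiv hg hξ
      _ = ∫⁻ t in Ioi (1 : ℝ), ‖ξ‖ₑ * ‖radialDeriv g (t • ξ)‖ₑ := by
          refine setLIntegral_congr_fun measurableSet_Ioi fun t ht => ?_
          rw [fderiv_smul_apply_eq_norm_smul_radialDeriv g (zero_lt_one.trans ht), enorm_smul,
            enorm_norm]
      _ = ‖ξ‖ₑ * ∫⁻ t in Ioi (1 : ℝ), ‖radialDeriv g (t • ξ)‖ₑ :=
          lintegral_const_mul' _ _ enorm_ne_top
  rcases eq_or_ne ξ 0 with rfl | hξ0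
  · simp
  have hcast : ‖(‖ξ‖ : ℂ)‖ₑ = ‖ξ‖ₑ := by simp [← ofReal_norm]
  rw [div_eq_mul_inv, enorm_mul, enorm_inv (by simpa), hcast, ← div_eq_mul_inv]
  exact ENNReal.div_le_of_le_mul' hray

theorem dyadicNorm_eq (σ : ℝ) (h : E3 → ℂ) :
    dyadicNorm σ h = ∑' k : ℤ, 2 ^ (σ * k) * eLpNorm ((dyadicShell k).indicator h) 2 volume := by
  refine tsum_congr fun k => ?_
  rw [← ENNReal.ofReal_rpow_of_pos two_pos, ENNReal.ofReal_ofNat]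
  rfl

theorem eLpNorm_indicator_div_norm_le {g : E3 → ℂ} (hg : ContDiff ℝ 1 g)
    (hdecay : ∀ ω : E3, ‖ω‖ = 1 → Tendsto (fun s : ℝ => g (s • ω)) atTop (𝓝 0)) (k : ℤ) :
    eLpNorm ((dyadicShell k).indicator fun ξ => g ξ / (‖ξ‖ : ℂ)) 2 volume
      ≤ ∑' m : ℕ, 2 ^ (-(m : ℝ) / 2) *
        (eLpNorm ((dyadicShell (k + m)).indicator (radialDeriv g)) 2 volume
          + eLpNorm ((dyadicShell (k + m + 1)).indicator (radialDeriv g)) 2 volume) := by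
  have hN (j : ℤ) : eLpNorm ((dyadicShell j).indicator fun ξ => ‖radialDeriv g ξ‖ₑ) 2 volume
      = eLpNorm ((dyadicShell j).indicator (radialDeriv g)) 2 volume := by
    rw [← eLpNorm_enorm ((dyadicShell j).indicator (radialDeriv g))]
    simp_rw [enorm_indicator_eq_indicator_enorm]
  calc eLpNorm ((dyadicShell k).indicator fun ξ => g ξ / (‖ξ‖ : ℂ)) 2 volume
      ≤ eLpNorm ((dyadicShell k).indicator fun ξ => ∫⁻ t in Ioi (1 : ℝ),
          ‖radialDeriv g (t • ξ)‖ₑ) 2 volume := by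
        refine eLpNorm_mono_enorm fun ξ => ?_
        by_cases hξ : ξ ∈ dyadicShell k
        · simpa [hξ] using enorm_div_norm_le_lintegral_radialDeriv hg
            (tendsto_comp_smul_of_forall_norm_eq_one hdecay (ne_zero_of_mem_dyadicShell hξ))
        · simp [hξ]
    _ ≤ _ := eLpNorm_indicator_lintegral_comp_smul_le volume (measurable_radialDeriv g).enorm k
    _ = _ := by
        refine tsum_congr fun m => ?_
        rw [hN, hN, finrank_euclideanSpace_fin]
        congr 2
        push_cast
        ring

theorem stmt12 :
    ∃ C : ℝ, 0 < C ∧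
      ∀ g : E3 → ℂ, ContDiff ℝ 1 g → g 0 = 0 →
        (∀ ω : E3, ‖ω‖ = 1 → Tendsto (fun s : ℝ => g (s • ω)) atTop (𝓝 0)) →
        dyadicNorm (1/2) (fun ξ => g ξ / (‖ξ‖ : ℂ))
          ≤ ENNReal.ofReal C * dyadicNorm (1/2) (radialDeriv g) := by
  refine ⟨4, four_pos, fun g hg _ hdecay => ?_⟩
  rw [dyadicNorm_eq, dyadicNorm_eq, ENNReal.ofReal_ofNat]
  refine le_trans (ENNReal.tsum_le_tsum fun k => ?_) (tsum_two_rpow_mul_tsum_le _)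
  gcongr
  exact eLpNorm_indicator_div_norm_le hg hdecay k

end
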